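/- Let A ⊆ ℚ̄ be a subset containing only finitely many roots of unity. Then inf I_N(A) = inf I_B(A), where the infima are taken in ℝ ∪ {±∞}. -/

import Mathlib

open Polynomial

noncomputable section

/-- The primitive integer minimal polynomial of an algebraic number `x ∈ ℂ`. -/
def intMinpoly (x : ℂ) : Polynomial ℤ :=
  (IsLocalization.integerNormalization (nonZeroDivisors ℤ) (minpoly ℚ x)).primPart

/-- `deg(x) = [ℚ(x):ℚ]`, the degree of an algebraic number. -/
def degQ (x : ℂ) : ℕ := (minpoly ℚ x).natDegree

/-- The absolute logarithmic Weil height of an algebraic number `x`, given as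
`(1/deg x) · log (|a₀| · ∏ max(1,|conjugate|))` where `a₀` is the leading coefficient of the
primitive integer minimal polynomial of `x` and the product runs over the complex roots
of that polynomial (i.e. the conjugates of `x`). -/
def weilHeight (x : ℂ) : ℝ :=
  (degQ x : ℝ)⁻¹ *
    Real.log (((intMinpoly x).leadingCoeff.natAbs : ℝ) *
      (((intMinpoly x).map (Int.castRingHom ℂ)).roots.map
        (fun z => max 1 ‖z‖)).prod)

/-- The `γ`-weighted Weil height `h_γ(x) = deg(x)^γ · h(x)`. -/
def wheight (γ : ℝ) (x : ℂ) : ℝ := (degQ x : ℝ) ^ γ * weilHeight x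

/-- `x` is a root of unity. -/
def IsRootOfUnity (x : ℂ) : Prop := ∃ n : ℕ, 0 < n ∧ x ^ n = 1

/-- `μ_A`, the set of roots of unity contained in `A`. -/
def muSet (A : Set ℂ) : Set ℂ := {a ∈ A | IsRootOfUnity a}

/-- `A` has the `γ`-Northcott property: for every `C > 0` there are only finitely many
`a ∈ A` with `h_γ(a) < C`. -/
def NorthcottProp (γ : ℝ) (A : Set ℂ) : Prop :=
  ∀ C : ℝ, 0 < C → {a ∈ A | wheight γ a < C}.Finite

/-- `A` has the `γ`-Bogomolov property: for some `C > 0` there are only finitely many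
`a ∈ A ∖ μ_A` with `h_γ(a) < C`. -/
def BogomolovProp (γ : ℝ) (A : Set ℂ) : Prop :=
  ∃ C : ℝ, 0 < C ∧ {a ∈ A \ muSet A | wheight γ a < C}.Finite

/-- The `γ`-Northcott number `Nor_γ(A) = inf {C > 0 | N_γ(A,C) = ∞}` (equal to `∞` if
`N_γ(A,C)` is finite for every `C`). -/
def northcottNumber (γ : ℝ) (A : Set ℂ) : EReal :=
  sInf {x : EReal | ∃ C : ℝ, x = (C : EReal) ∧ 0 < C ∧ ¬ {a ∈ A | wheight γ a < C}.Finite}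

/-- `I_N(A) = {γ ∈ ℝ | A has γ-(N)}`. -/
def IN (A : Set ℂ) : Set ℝ := {γ | NorthcottProp γ A}

/-- `I_B(A) = {γ ∈ ℝ | A has γ-(B)}`. -/
def IB (A : Set ℂ) : Set ℝ := {γ | BogomolovProp γ A}

/-!
Northcott implies Bogomolov, so `I_N(A) ⊆ I_B(A)`. Conversely, let `A` have `γ`-(B) with
constant `C`, let `γ < γ'` and `C' > 0`. An `a ∈ A` with `h_{γ'}(a) < C'` is one of the finitely
many roots of unity in `A`, or one of the finitely many exceptions to `h_γ(a) ≥ C`, or else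
`deg(a)^{γ'-γ} · C ≤ h_{γ'}(a) < C'`. In the last case `deg(a)` is bounded, hence so is `h(a)`, and
Northcott's theorem (finitely many integer polynomials of bounded degree and Mahler measure) leaves
finitely many such `a`. Thus `I_N(A)` contains every `γ' > γ` with `γ ∈ I_B(A)`, and the two infima
agree.
-/

theorem IsLocalization.natDegree_integerNormalization {A K : Type*} [CommRing A] [IsDomain A]
    [Field K] [Algebra A K] [IsFractionRing A K] (p : K[X]) :
    (integerNormalization (nonZeroDivisors A) p).natDegree = p.natDegree := by
  obtain ⟨b, hb, hmap⟩ := integerNormalization_spec (nonZeroDivisors A) p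
  rw [← natDegree_map_eq_of_injective (IsFractionRing.injective A K), hmap,
    natDegree_smul _ (nonZeroDivisors.ne_zero hb)]

lemma intMinpoly_ne_zero (x : ℂ) : intMinpoly x ≠ 0 :=
  primPart_ne_zero _

lemma intMinpoly_natDegree (x : ℂ) : (intMinpoly x).natDegree = degQ x := by
  rw [intMinpoly, natDegree_primPart, IsLocalization.natDegree_integerNormalization, degQ]

lemma aeval_intMinpoly {x : ℂ} (hx : IsAlgebraic ℚ x) : aeval x (intMinpoly x) = 0 :=
  aeval_primPart_eq_zero
    (by
      rw [Ne, IsFractionRing.integerNormalization_eq_zero_iff]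
      exact minpoly.ne_zero hx.isIntegral)
    (IsLocalization.integerNormalization_aeval_eq_zero _ _ (minpoly.aeval ℚ x))

lemma degQ_pos {x : ℂ} (hx : IsAlgebraic ℚ x) : 0 < degQ x :=
  minpoly.natDegree_pos hx.isIntegral

lemma weilHeight_eq_log_mahlerMeasure (x : ℂ) :
    weilHeight x =
      (degQ x : ℝ)⁻¹ * Real.log ((intMinpoly x).map (Int.castRingHom ℂ)).mahlerMeasure := by
  rw [weilHeight, mahlerMeasure_eq_leadingCoeff_mul_prod_roots,
    leadingCoeff_map_of_injective (RingHom.injective_int _)]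
  simp

lemma mahlerMeasure_intMinpoly {x : ℂ} (hx : IsAlgebraic ℚ x) :
    ((intMinpoly x).map (Int.castRingHom ℂ)).mahlerMeasure =
      Real.exp (degQ x * weilHeight x) := by
  have hdeg : (degQ x : ℝ) ≠ 0 := by exact_mod_cast (degQ_pos hx).ne'
  rw [weilHeight_eq_log_mahlerMeasure, mul_inv_cancel_left₀ hdeg, Real.exp_log
    (zero_lt_one.trans_le (one_le_mahlerMeasure_of_ne_zero (intMinpoly_ne_zero x)))]

lemma weilHeight_nonneg (x : ℂ) : 0 ≤ weilHeight x := by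
  rw [weilHeight_eq_log_mahlerMeasure]
  exact mul_nonneg (by positivity)
    (Real.log_nonneg (one_le_mahlerMeasure_of_ne_zero (intMinpoly_ne_zero x)))

theorem finite_setOf_degQ_le_weilHeight_lt (D : ℕ) (C : ℝ) :
    {x : ℂ | IsAlgebraic ℚ x ∧ degQ x ≤ D ∧ weilHeight x < C}.Finite := by
  let B : NNReal := ⟨Real.exp (D * max C 0), (Real.exp_pos _).le⟩
  refine ((finite_mahlerMeasure_le D B).biUnion fun p _ =>
    (p.aroots ℂ).toFinset.finite_toSet).subset ?_
  rintro x ⟨hx, hD, hC⟩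
  refine Set.mem_biUnion (x := intMinpoly x) ⟨intMinpoly_natDegree x ▸ hD, ?_⟩ ?_
  · show _ ≤ Real.exp (D * max C 0)
    rw [mahlerMeasure_intMinpoly hx]
    gcongr
    exacts [weilHeight_nonneg x, le_max_of_le_left hC.le]
  · exact Multiset.mem_toFinset.2 (mem_aroots.2 ⟨intMinpoly_ne_zero x, aeval_intMinpoly hx⟩)

lemma wheight_nonneg (γ : ℝ) (x : ℂ) : 0 ≤ wheight γ x :=
  mul_nonneg (Real.rpow_nonneg (Nat.cast_nonneg _) _) (weilHeight_nonneg x)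

lemma wheight_eq_rpow_mul_wheight {x : ℂ} (hx : IsAlgebraic ℚ x) (γ γ' : ℝ) :
    wheight γ' x = (degQ x : ℝ) ^ (γ' - γ) * wheight γ x := by
  have hdeg : (0 : ℝ) < degQ x := by exact_mod_cast degQ_pos hx
  rw [wheight, wheight, ← mul_assoc, ← Real.rpow_add hdeg, sub_add_cancel]

lemma degQ_lt_of_le_wheight_of_wheight_lt {x : ℂ} (hx : IsAlgebraic ℚ x) {γ γ' C C' : ℝ}
    (hγ : γ < γ') (hC : 0 < C) (h : C ≤ wheight γ x) (h' : wheight γ' x < C') :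
    (degQ x : ℝ) < (C' / C) ^ (γ' - γ)⁻¹ := by
  have hC' : 0 ≤ C' := (wheight_nonneg γ' x).trans h'.le
  rw [Real.lt_rpow_inv_iff_of_pos (Nat.cast_nonneg _) (by positivity) (sub_pos.2 hγ),
    lt_div_iff₀ hC]
  calc (degQ x : ℝ) ^ (γ' - γ) * C ≤ (degQ x : ℝ) ^ (γ' - γ) * wheight γ x := by gcongr
    _ = wheight γ' x := (wheight_eq_rpow_mul_wheight hx γ γ').symm
    _ < C' := h'

lemma weilHeight_lt_of_wheight_lt {x : ℂ} (hx : IsAlgebraic ℚ x) {γ C : ℝ} {D : ℕ}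
    (hD : degQ x ≤ D) (h : wheight γ x < C) : weilHeight x < (D : ℝ) ^ |γ| * C := by
  have hdeg : (1 : ℝ) ≤ degQ x := by exact_mod_cast degQ_pos hx
  have hdegD : (degQ x : ℝ) ≤ D := by exact_mod_cast hD
  calc weilHeight x = (degQ x : ℝ) ^ (0 - γ) * wheight γ x := by
        rw [← wheight_eq_rpow_mul_wheight hx, wheight, Real.rpow_zero, one_mul]
    _ ≤ (D : ℝ) ^ |γ| * wheight γ x := by
        gcongr
        · exact wheight_nonneg γ x
        · calc (degQ x : ℝ) ^ (0 - γ) ≤ (degQ x : ℝ) ^ |γ| :=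
                Real.rpow_le_rpow_of_exponent_le hdeg (by rw [zero_sub]; exact neg_le_abs γ)
            _ ≤ (D : ℝ) ^ |γ| := by gcongr
    _ < (D : ℝ) ^ |γ| * C := by
        gcongr
        exact Real.rpow_pos_of_pos (by linarith) _

lemma IN_subset_IB (A : Set ℂ) : IN A ⊆ IB A :=
  fun _ hγ => ⟨1, one_pos, (hγ 1 one_pos).subset fun _ ha => ⟨ha.1.1, ha.2⟩⟩

theorem mem_IN_of_mem_IB_of_lt {A : Set ℂ} (hA : ∀ a ∈ A, IsAlgebraic ℚ a)
    (hμ : (muSet A).Finite) {γ γ' : ℝ} (hγ : γ ∈ IB A) (hlt : γ < γ') :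
    γ' ∈ IN A := by
  obtain ⟨C, hC, hfin⟩ := hγ
  intro C' _
  set D := ⌊(C' / C) ^ (γ' - γ)⁻¹⌋₊
  refine ((hμ.union hfin).union
    (finite_setOf_degQ_le_weilHeight_lt D ((D : ℝ) ^ |γ'| * C'))).subset ?_
  rintro a ⟨haA, ha⟩
  by_cases hroot : IsRootOfUnity a
  · exact Or.inl (Or.inl ⟨haA, hroot⟩)
  by_cases hsmall : wheight γ a < C
  · exact Or.inl (Or.inr ⟨⟨haA, fun h => hroot h.2⟩, hsmall⟩)
  have hD : degQ a ≤ D :=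
    Nat.le_floor (degQ_lt_of_le_wheight_of_wheight_lt (hA a haA) hlt hC (not_lt.1 hsmall) ha).le
  exact Or.inr ⟨hA a haA, hD, weilHeight_lt_of_wheight_lt (hA a haA) hD ha⟩

theorem sInf_coe_image_eq_of_forall_lt_mem {S T : Set ℝ} (hST : S ⊆ T)
    (h : ∀ γ ∈ T, ∀ γ', γ < γ' → γ' ∈ S) :
    sInf ((↑) '' S : Set EReal) = sInf ((↑) '' T) := by
  refine le_antisymm (le_sInf ?_) (sInf_le_sInf (Set.image_mono hST))
  rintro _ ⟨γ, hγ, rfl⟩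
  exact EReal.le_of_forall_lt_iff_le.1 fun z hz =>
    sInf_le ⟨z, h γ hγ z (EReal.coe_lt_coe_iff.1 hz), rfl⟩

/-- If `A ⊆ ℚ̄` contains only finitely many roots of unity, then
`inf I_N(A) = inf I_B(A)` (infima taken in `ℝ ∪ {±∞}`). -/
theorem inf_IN_eq_inf_IB (A : Set ℂ) (hA : ∀ a ∈ A, IsAlgebraic ℚ a)
    (hμ : (muSet A).Finite) :
    sInf ((fun γ : ℝ => (γ : EReal)) '' IN A) =
      sInf ((fun γ : ℝ => (γ : EReal)) '' IB A) :=
  sInf_coe_image_eq_of_forall_lt_mem (IN_subset_IB A)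
    fun _ hγ _ hlt => mem_IN_of_mem_IB_of_lt hA hμ hγ hlt

end
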